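/- The Livšic characteristic function of the second derivative on the half-line, B(w) = ((w - i)(√w - conj(√i))) / ((w + i)(√w - conj(√(-i)))) = ((w-i)(√w - (1-i)/√2)) / ((w+i)(√w + (1+i)/√2)), satisfies |B(w)| < 1 for all w in the upper half-plane and |B(s)| ≤ 1 for real s, with |B(s)| = 1 if and only if s ≤ 0. -/

import Mathlib

open Complex Real

private lemma cpow_half_re_nonneg (w : ℂ) : 0 ≤ (w ^ ((1:ℂ)/2)).re := by
  rcases eq_or_ne w 0 with h | h
  · simp [h, Complex.zero_cpow (by norm_num : (1:ℂ)/2 ≠ 0)]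
  · rw [Complex.cpow_def_of_ne_zero h, Complex.exp_re]
    have him : (Complex.log w * ((1:ℂ)/2)).im = w.arg / 2 := by
      simp [Complex.mul_im, Complex.log_im]
      ring_nf
    rw [him]
    have h1 := Complex.neg_pi_lt_arg w
    have h2 := Complex.arg_le_pi w
    exact mul_nonneg (Real.exp_nonneg _)
      (Real.cos_nonneg_of_mem_Icc ⟨by linarith, by linarith⟩)

private lemma cpow_half_re_eq (w : ℂ) (h : w ≠ 0) :
    (w ^ ((1:ℂ)/2)).re = Real.exp ((Complex.log w).re / 2) * Real.cos (w.arg / 2) := by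
  rw [Complex.cpow_def_of_ne_zero h, Complex.exp_re]
  congr 1
  · simp [Complex.mul_re]
    ring_nf
  · simp [Complex.mul_im, Complex.log_im]
    ring_nf

private lemma cpow_half_sq (w : ℂ) (h : w ≠ 0) : w ^ ((1:ℂ)/2) * w ^ ((1:ℂ)/2) = w := by
  rw [← Complex.cpow_add _ _ h]
  norm_num

private lemma normSq_key (z : ℂ) :
    Complex.normSq (z + (1 + I) / (Real.sqrt 2 : ℂ))
      - Complex.normSq (z - (1 - I) / (Real.sqrt 2 : ℂ)) = 2 * Real.sqrt 2 * z.re := by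
  have h2 : Real.sqrt 2 * Real.sqrt 2 = 2 := Real.mul_self_sqrt (by norm_num)
  have h2' : Real.sqrt 2 ≠ 0 := by positivity
  simp only [Complex.normSq_apply, Complex.add_re, Complex.add_im, Complex.sub_re,
    Complex.sub_im, Complex.div_ofReal_re, Complex.div_ofReal_im, Complex.add_re,
    Complex.one_re, Complex.I_re, Complex.one_im, Complex.I_im, Complex.sub_re, Complex.sub_im]
  field_simp
  linear_combination (-2 * z.re * Real.sqrt 2) * h2

private lemma normSq_den_pos (z : ℂ) (h : 0 ≤ z.re) :
    0 < Complex.normSq (z + (1 + I) / (Real.sqrt 2 : ℂ)) := by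
  rw [Complex.normSq_pos]
  intro h0
  have hz : z = -((1 + I) / (Real.sqrt 2 : ℂ)) := eq_neg_of_add_eq_zero_left h0
  have hre : z.re = -(1 / Real.sqrt 2) := by
    rw [hz]; simp [Complex.div_ofReal_re]
  have hpos : 0 < (1:ℝ) / Real.sqrt 2 := by positivity
  rw [hre] at h
  linarith

private lemma cpow_half_re_pos_of_im {w : ℂ} (hw : 0 < w.im) : 0 < (w ^ ((1:ℂ)/2)).re := by
  have hw0 : w ≠ 0 := by
    intro h; rw [h] at hw; simp at hw
  rcases (cpow_half_re_nonneg w).lt_or_eq with h | h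
  · exact h
  · exfalso
    have hsq := cpow_half_sq w hw0
    have him : w.im = 2 * (w ^ ((1:ℂ)/2)).re * (w ^ ((1:ℂ)/2)).im := by
      conv_lhs => rw [← hsq]
      simp [Complex.mul_im]
      ring_nf
    rw [← h] at him
    simp at him
    rw [him] at hw
    simp at hw

private lemma cpow_half_re_pos_of_pos {s : ℝ} (hs : 0 < s) : 0 < (((s:ℂ)) ^ ((1:ℂ)/2)).re := by
  have h0 : (s:ℂ) ≠ 0 := by exact_mod_cast hs.ne'
  rw [cpow_half_re_eq _ h0, Complex.arg_ofReal_of_nonneg hs.le]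
  simp [Real.exp_pos]

private lemma cpow_half_re_eq_zero_of_neg {s : ℝ} (hs : s < 0) : (((s:ℂ)) ^ ((1:ℂ)/2)).re = 0 := by
  have h0 : (s:ℂ) ≠ 0 := by exact_mod_cast hs.ne
  rw [cpow_half_re_eq _ h0, Complex.arg_ofReal_of_neg hs]
  simp [Real.cos_pi_div_two]

/-- The Livšic characteristic function of `-d²/dx²` on the half-line,
`B(w) = ((w-i)(√w - (1-i)/√2)) / ((w+i)(√w + (1+i)/√2))`, satisfies `|B(w)| < 1`
on the open upper half-plane, `|B(s)| ≤ 1` for real `s`, and `|B(s)| = 1 ↔ s ≤ 0`. -/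
theorem halfline_livsic_contractive :
    (∀ w : ℂ, 0 < w.im →
      ‖(((w - I) * (w ^ ((1 : ℂ)/2) - (1 - I) / (Real.sqrt 2 : ℂ))) /
        ((w + I) * (w ^ ((1 : ℂ)/2) + (1 + I) / (Real.sqrt 2 : ℂ))))‖ < 1) ∧
    (∀ s : ℝ,
      ‖((((s : ℂ) - I) * ((s : ℂ) ^ ((1 : ℂ)/2) - (1 - I) / (Real.sqrt 2 : ℂ))) /
        (((s : ℂ) + I) * ((s : ℂ) ^ ((1 : ℂ)/2) + (1 + I) / (Real.sqrt 2 : ℂ))))‖ ≤ 1 ∧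
      (‖((((s : ℂ) - I) * ((s : ℂ) ^ ((1 : ℂ)/2) - (1 - I) / (Real.sqrt 2 : ℂ))) /
        (((s : ℂ) + I) * ((s : ℂ) ^ ((1 : ℂ)/2) + (1 + I) / (Real.sqrt 2 : ℂ))))‖ = 1 ↔ s ≤ 0)) := by
  have hs2 : 0 < Real.sqrt 2 := by positivity
  constructor
  · intro w hw
    set z := w ^ ((1:ℂ)/2) with hz
    have hzre : 0 < z.re := cpow_half_re_pos_of_im hw
    have hnum : Complex.normSq (w - I) < Complex.normSq (w + I) := by
      simp only [Complex.normSq_apply, Complex.sub_re, Complex.sub_im, Complex.add_re,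
        Complex.add_im, Complex.I_re, Complex.I_im]
      nlinarith
    have hfac : Complex.normSq (z - (1 - I) / (Real.sqrt 2 : ℂ))
        < Complex.normSq (z + (1 + I) / (Real.sqrt 2 : ℂ)) := by
      have := normSq_key z
      nlinarith
    have hd1 : 0 < Complex.normSq (w + I) := by
      rw [Complex.normSq_pos]
      intro h
      have : (w + I).im = 0 := by rw [h]; simp
      simp [Complex.add_im] at this
      linarith
    have hd2 : 0 < Complex.normSq (z + (1 + I) / (Real.sqrt 2 : ℂ)) :=
      normSq_den_pos z hzre.le
    have hD : (w + I) * (z + (1 + I) / (Real.sqrt 2 : ℂ)) ≠ 0 :=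
      mul_ne_zero (Complex.normSq_pos.mp hd1) (Complex.normSq_pos.mp hd2)
    rw [norm_div, div_lt_one (norm_pos_iff.mpr hD)]
    rw [Complex.norm_def, Complex.norm_def]
    apply Real.sqrt_lt_sqrt (Complex.normSq_nonneg _)
    rw [Complex.normSq_mul, Complex.normSq_mul]
    exact mul_lt_mul'' hnum hfac (Complex.normSq_nonneg _) (Complex.normSq_nonneg _)
  · intro s
    set z := (s:ℂ) ^ ((1:ℂ)/2) with hz
    have hzre : 0 ≤ z.re := cpow_half_re_nonneg _
    have hiff : z.re = 0 ↔ s ≤ 0 := by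
      constructor
      · intro h
        by_contra hs
        push_neg at hs
        exact (cpow_half_re_pos_of_pos hs).ne' h
      · intro hs
        rcases lt_or_eq_of_le hs with h | h
        · exact cpow_half_re_eq_zero_of_neg h
        · have h0 : (s:ℂ) = 0 := by exact_mod_cast h
          rw [hz, h0]
          simp [Complex.zero_cpow (by norm_num : (1:ℂ)/2 ≠ 0)]
    have hAB : Complex.normSq ((s:ℂ) - I) = Complex.normSq ((s:ℂ) + I) := by
      simp [Complex.normSq_apply]
    have hA : 0 < Complex.normSq ((s:ℂ) + I) := by
      rw [Complex.normSq_pos]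
      intro h
      have : ((s:ℂ) + I).im = 0 := by rw [h]; simp
      simp at this
    have hBle : Complex.normSq (z - (1 - I) / (Real.sqrt 2 : ℂ))
        ≤ Complex.normSq (z + (1 + I) / (Real.sqrt 2 : ℂ)) := by
      have := normSq_key z
      nlinarith
    have hd2 : 0 < Complex.normSq (z + (1 + I) / (Real.sqrt 2 : ℂ)) :=
      normSq_den_pos z hzre
    have hD : ((s:ℂ) + I) * (z + (1 + I) / (Real.sqrt 2 : ℂ)) ≠ 0 :=
      mul_ne_zero (Complex.normSq_pos.mp hA) (Complex.normSq_pos.mp hd2)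
    have habsD : 0 < ‖((s:ℂ) + I) * (z + (1 + I) / (Real.sqrt 2 : ℂ))‖ :=
      norm_pos_iff.mpr hD
    constructor
    · rw [norm_div, div_le_one habsD, Complex.norm_def, Complex.norm_def]
      apply Real.sqrt_le_sqrt
      rw [Complex.normSq_mul, Complex.normSq_mul, ← hAB]
      exact mul_le_mul_of_nonneg_left hBle (Complex.normSq_nonneg _)
    · rw [norm_div, div_eq_one_iff_eq habsD.ne', Complex.norm_def, Complex.norm_def,
        Real.sqrt_inj (Complex.normSq_nonneg _) (Complex.normSq_nonneg _),
        Complex.normSq_mul, Complex.normSq_mul, ← hAB,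
        mul_right_inj' (hAB ▸ hA).ne']
      have hkey := normSq_key z
      rw [← hiff]
      constructor
      · intro h
        nlinarith
      · intro h
        nlinarith
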